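/- arXiv:2306.17475 — 7 statements merged into one kernel-verified Lean document; each statement's English description precedes it below -/
import Mathlib

section
/- If α < 2/(κ(N−1)), then the pseudo-gradient map F is strongly monotone on ℝ^N with constant η_F = 1/(αN) − κ(N−1)/(2N) > 0; that is, for all β̄, β̃ ∈ ℝ^N, (β̄ − β̃)ᵀ(F(β̄) − F(β̃)) ≥ η_F‖β̄ − β̃‖². -/
lemma key_term (κ e s Δ : ℝ) (hκ : 0 < κ) (h1 : 0 ≤ e * Δ) (h2 : |Δ| ≤ κ * |e|) :
    -(κ * s ^ 2) / 4 ≤ (e + s) * Δ := by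
  have hΔ2 : Δ ^ 2 ≤ κ * (e * Δ) := by
    have h := mul_le_mul_of_nonneg_right h2 (abs_nonneg Δ)
    have : |Δ| * |Δ| = Δ ^ 2 := by rw [← abs_mul, abs_mul_self]; ring
    rw [this, mul_assoc, ← abs_mul, abs_of_nonneg h1] at h
    exact h
  nlinarith [sq_nonneg (Δ + κ * s / 2), sq_nonneg Δ]

lemma mono_mul (f : ℝ → ℝ) (hf : Monotone f) (a b : ℝ) : 0 ≤ (b - a) * (f b - f a) := by
  rcases le_total a b with h | h
  · exact mul_nonneg (by linarith) (by linarith [hf h])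
  · nlinarith [hf h]

lemma final_ineq (N α κ T P s : ℝ) (hN : 2 ≤ N) (hα : 0 < α) (hκ : 0 < κ)
    (hT : 0 ≤ T) (hCS : s ^ 2 ≤ N * T) (hP' : -(κ * s ^ 2) ≤ 4 * N * P) :
    (1 / (α * N) - κ * (N - 1) / (2 * N)) * T ≤
      ((N - 1) / N) * P + (s ^ 2 * (N - 2) + N * T) / (α * N ^ 2) := by
  have hN0 : (0 : ℝ) < N := by linarith
  rw [← sub_nonneg]
  have expand : ((N - 1) / N) * P + (s ^ 2 * (N - 2) + N * T) / (α * N ^ 2)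
      - (1 / (α * N) - κ * (N - 1) / (2 * N)) * T
      = (α * (N - 1) * N * P + s ^ 2 * (N - 2) + α * κ * (N - 1) * N * T / 2)
        / (α * N ^ 2) := by
    field_simp
    ring
  rw [expand]
  apply div_nonneg _ (by positivity)
  have hA : 0 ≤ α * (N - 1) := mul_nonneg hα.le (by linarith)
  have c1 : 0 ≤ α * (N - 1) / 4 := by linarith
  have c2 : 0 ≤ α * κ * (N - 1) / 2 := by nlinarith
  have t1 := mul_le_mul_of_nonneg_left hP' c1
  have t2 := mul_le_mul_of_nonneg_left hCS c2
  have t3 : 0 ≤ s ^ 2 * (N - 2) := mul_nonneg (sq_nonneg s) (by linarith)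
  have t4 : 0 ≤ α * κ * (N - 1) / 2 * s ^ 2 := mul_nonneg c2 (sq_nonneg s)
  nlinarith [t1, t2, t3, t4]

/-- If `α < 2/(κ(N−1))`, then the pseudo-gradient map `F` is strongly
monotone on `ℝ^N` with constant `η_F = 1/(αN) − κ(N−1)/(2N) > 0`; that is, for all
`β̄, β̃ ∈ ℝ^N`, `(β̄ − β̃)ᵀ(F(β̄) − F(β̃)) ≥ η_F‖β̄ − β̃‖²`. -/
theorem strongly_monotone_pseudo_gradient
    (N : ℕ) (hN : 2 ≤ N) (α κ xtot : ℝ) (hα : 0 < α) (hκ : 0 < κ)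
    (C : Fin N → ℝ → ℝ)
    (hC2 : ∀ n, ContDiff ℝ 2 (C n))
    (hCconv : ∀ n, ConvexOn ℝ Set.univ (C n))
    (hClip : ∀ n, ∀ y y' : ℝ, |deriv (C n) y' - deriv (C n) y| ≤ κ * |y' - y|)
    (x : (Fin N → ℝ) → Fin N → ℝ)
    (hx : ∀ β n, x β n = (xtot - ∑ m, β m) / (N : ℝ) + β n)
    (F : (Fin N → ℝ) → Fin N → ℝ)
    (hF : ∀ β n, F β n =
      (((N : ℝ) - 1) / (N : ℝ)) * deriv (C n) (x β n)
        + (((∑ m, β m) - xtot) * ((N : ℝ) - 2) + (N : ℝ) * β n) / (α * (N : ℝ) ^ 2))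
    (hαlt : α < 2 / (κ * ((N : ℝ) - 1))) :
    0 < 1 / (α * (N : ℝ)) - κ * ((N : ℝ) - 1) / (2 * (N : ℝ)) ∧
      ∀ βb βt : Fin N → ℝ,
        (1 / (α * (N : ℝ)) - κ * ((N : ℝ) - 1) / (2 * (N : ℝ))) * ∑ n, (βb n - βt n) ^ 2 ≤
          ∑ n, (βb n - βt n) * (F βb n - F βt n) := by
  have hNR : (2 : ℝ) ≤ (N : ℝ) := by exact_mod_cast hN
  have hN0 : (0 : ℝ) < (N : ℝ) := by linarith
  have hN1 : (0 : ℝ) < ((N : ℝ) - 1) := by linarith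
  have hκN : 0 < κ * ((N : ℝ) - 1) := mul_pos hκ hN1
  have hακ : α * (κ * ((N : ℝ) - 1)) < 2 := (lt_div_iff₀ hκN).mp hαlt
  constructor
  · rw [sub_pos, div_lt_div_iff₀ (by linarith) (by positivity)]
    nlinarith
  intro βb βt
  set Sb := ∑ m, βb m with hSb
  set St := ∑ m, βt m with hSt
  set s := Sb - St with hs
  set T := ∑ n, (βb n - βt n) ^ 2 with hT
  set P := ∑ n, (βb n - βt n) * (deriv (C n) (x βb n) - deriv (C n) (x βt n)) with hPdef
  have hdiff : ∀ n, Differentiable ℝ (C n) := fun n => (hC2 n).differentiable (by simp)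
  have hmono : ∀ n, Monotone (deriv (C n)) := fun n =>
    monotoneOn_univ.mp ((hCconv n).monotoneOn_deriv
      (fun y _ => (hdiff n) y))
  -- per-term bound for P
  have hterm : ∀ n ∈ Finset.univ, -(κ * (s / (N : ℝ)) ^ 2) / 4 ≤
      (βb n - βt n) * (deriv (C n) (x βb n) - deriv (C n) (x βt n)) := by
    intro n _
    have he : βb n - βt n = (x βb n - x βt n) + s / (N : ℝ) := by
      rw [hx, hx, hs, hSb, hSt]
      field_simp
      ring
    rw [he]
    apply key_term κ _ _ _ hκ
    · exact mono_mul _ (hmono n) (x βt n) (x βb n)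
    · exact hClip n (x βt n) (x βb n)
  have hPsum : (N : ℝ) * (-(κ * (s / (N : ℝ)) ^ 2) / 4) ≤ P := by
    have h := Finset.sum_le_sum hterm
    rw [Finset.sum_const, Finset.card_univ, Fintype.card_fin, nsmul_eq_mul] at h
    exact h
  have hP' : -(κ * s ^ 2) ≤ 4 * (N : ℝ) * P := by
    have heq : (N : ℝ) * (-(κ * (s / (N : ℝ)) ^ 2) / 4) = -(κ * s ^ 2) / (4 * (N : ℝ)) := by
      field_simp
    rw [heq] at hPsum
    have := (div_le_iff₀ (by positivity : (0 : ℝ) < 4 * (N : ℝ))).mp hPsum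
    linarith
  -- Cauchy-Schwarz
  have hCS : s ^ 2 ≤ (N : ℝ) * T := by
    have h := sq_sum_le_card_mul_sum_sq (s := (Finset.univ : Finset (Fin N)))
      (f := fun n => βb n - βt n)
    rw [Finset.card_univ, Fintype.card_fin] at h
    have hsum : ∑ n, (βb n - βt n) = s := by
      rw [hs, hSb, hSt, Finset.sum_sub_distrib]
    rw [hsum] at h
    exact_mod_cast h
  have hT0 : 0 ≤ T := Finset.sum_nonneg fun n _ => sq_nonneg _
  -- rewrite the RHS
  have hRHS : ∑ n, (βb n - βt n) * (F βb n - F βt n)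
      = (((N : ℝ) - 1) / (N : ℝ)) * P
        + (s ^ 2 * ((N : ℝ) - 2) + (N : ℝ) * T) / (α * (N : ℝ) ^ 2) := by
    have hcongr : ∀ n ∈ Finset.univ, (βb n - βt n) * (F βb n - F βt n)
        = (((N : ℝ) - 1) / (N : ℝ)) *
            ((βb n - βt n) * (deriv (C n) (x βb n) - deriv (C n) (x βt n)))
          + (s * ((N : ℝ) - 2) * (βb n - βt n) + (N : ℝ) * (βb n - βt n) ^ 2)
            / (α * (N : ℝ) ^ 2) := by
      intro n _
      rw [hF, hF, hs, hSb, hSt]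
      field_simp
      ring
    rw [Finset.sum_congr rfl hcongr, Finset.sum_add_distrib, ← Finset.mul_sum,
      ← Finset.sum_div, ← hPdef]
    congr 1
    rw [Finset.sum_add_distrib, ← Finset.mul_sum, ← Finset.mul_sum,
      Finset.sum_sub_distrib, ← hSb, ← hSt, ← hs, ← hT]
    ring_nf
  rw [hRHS]
  exact final_ineq (N : ℝ) α κ T P s hNR hα hκ hT0 hCS hP'
end

section
/- The pseudo-gradient map F is Lipschitz continuous on ℝ^N with constant κ_F = ((N−1)/N)(κ + 1/α); that is, for all β̄, β̃ ∈ ℝ^N, ‖F(β̄) − F(β̃)‖ ≤ κ_F‖β̄ − β̃‖. -/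
private lemma sqrt_sum_add_sq_le {N : ℕ} (u v : Fin N → ℝ) :
    Real.sqrt (∑ n, (u n + v n) ^ 2) ≤
      Real.sqrt (∑ n, (u n) ^ 2) + Real.sqrt (∑ n, (v n) ^ 2) := by
  have h := norm_add_le ((WithLp.equiv 2 (Fin N → ℝ)).symm u)
    ((WithLp.equiv 2 (Fin N → ℝ)).symm v)
  simpa [EuclideanSpace.norm_eq, Real.norm_eq_abs, sq_abs] using h

private lemma sqrt_sum_le_of_le {N : ℕ} (u : Fin N → ℝ) (c S : ℝ) (hc : 0 ≤ c)
    (h : ∑ n, (u n) ^ 2 ≤ c ^ 2 * S) :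
    Real.sqrt (∑ n, (u n) ^ 2) ≤ c * Real.sqrt S := by
  calc Real.sqrt (∑ n, (u n) ^ 2) ≤ Real.sqrt (c ^ 2 * S) := Real.sqrt_le_sqrt h
    _ = c * Real.sqrt S := by
        rw [Real.sqrt_mul (sq_nonneg c), Real.sqrt_sq hc]

/-- The pseudo-gradient map `F` is Lipschitz continuous on `ℝ^N` with constant
`κ_F = ((N−1)/N)(κ + 1/α)`; that is, for all `β̄, β̃ ∈ ℝ^N`,
`‖F(β̄) − F(β̃)‖ ≤ κ_F ‖F(β̄) − F(β̃)‖` (Euclidean norms). -/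
theorem lipschitz_pseudo_gradient
    (N : ℕ) (hN : 2 ≤ N) (α κ xtot : ℝ) (hα : 0 < α) (hκ : 0 < κ)
    (C : Fin N → ℝ → ℝ)
    (hC2 : ∀ n, ContDiff ℝ 2 (C n))
    (hCconv : ∀ n, ConvexOn ℝ Set.univ (C n))
    (hClip : ∀ n, ∀ y y' : ℝ, |deriv (C n) y' - deriv (C n) y| ≤ κ * |y' - y|)
    (x : (Fin N → ℝ) → Fin N → ℝ)
    (hx : ∀ β n, x β n = (xtot - ∑ m, β m) / (N : ℝ) + β n)
    (F : (Fin N → ℝ) → Fin N → ℝ)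
    (hF : ∀ β n, F β n =
      (((N : ℝ) - 1) / (N : ℝ)) * deriv (C n) (x β n)
        + (((∑ m, β m) - xtot) * ((N : ℝ) - 2) + (N : ℝ) * β n) / (α * (N : ℝ) ^ 2)) :
    ∀ βb βt : Fin N → ℝ,
      Real.sqrt (∑ n, (F βb n - F βt n) ^ 2) ≤
        (((N : ℝ) - 1) / (N : ℝ)) * (κ + 1 / α) * Real.sqrt (∑ n, (βb n - βt n) ^ 2) := by
  intro βb βt
  have hNr : (2 : ℝ) ≤ (N : ℝ) := by exact_mod_cast hN
  have hN0 : (0 : ℝ) < (N : ℝ) := by linarith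
  set d : Fin N → ℝ := fun n => βb n - βt n with hd
  set s : ℝ := ∑ n, d n with hs
  have hsum : (∑ m, βb m) - (∑ m, βt m) = s := by
    rw [hs, ← Finset.sum_sub_distrib]
  set u : Fin N → ℝ := fun n =>
    (((N : ℝ) - 1) / (N : ℝ)) * (deriv (C n) (x βb n) - deriv (C n) (x βt n)) with hu
  set v : Fin N → ℝ := fun n =>
    (s * ((N : ℝ) - 2) + (N : ℝ) * d n) / (α * (N : ℝ) ^ 2) with hv
  have hFd : ∀ n, F βb n - F βt n = u n + v n := by
    intro n
    rw [hF, hF, hu, hv]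
    have : s * ((N : ℝ) - 2) + (N : ℝ) * d n
        = ((∑ m, βb m) - xtot) * ((N : ℝ) - 2) + (N : ℝ) * βb n
          - (((∑ m, βt m) - xtot) * ((N : ℝ) - 2) + (N : ℝ) * βt n) := by
      simp only [← hsum, hd]; ring
    simp only [this]
    field_simp
    ring
  set S : ℝ := ∑ n, d n ^ 2 with hS
  have hSnn : 0 ≤ S := Finset.sum_nonneg fun n _ => sq_nonneg (d n)
  -- Cauchy-Schwarz: s^2 ≤ N * S
  have hCS : s ^ 2 ≤ (N : ℝ) * S := by
    have := sq_sum_le_card_mul_sum_sq (s := (Finset.univ : Finset (Fin N))) (f := d)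
    simpa [hs, hS] using this
  -- bound on u
  have hub : Real.sqrt (∑ n, (u n) ^ 2) ≤
      (((N : ℝ) - 1) / (N : ℝ)) * κ * Real.sqrt S := by
    apply sqrt_sum_le_of_le
    · have h1 : (0:ℝ) ≤ (N : ℝ) - 1 := by linarith
      positivity
    · have hptw : ∀ n, (u n) ^ 2 ≤
          ((((N : ℝ) - 1) / (N : ℝ)) * κ) ^ 2 * (d n - s / (N : ℝ)) ^ 2 := by
        intro n
        have hxd : x βb n - x βt n = d n - s / (N : ℝ) := by
          rw [hx, hx, ← hsum]
          simp only [hd]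
          field_simp
          ring
        have h1 : |deriv (C n) (x βb n) - deriv (C n) (x βt n)| ≤ κ * |d n - s / (N : ℝ)| := by
          have := hClip n (x βt n) (x βb n)
          rwa [hxd] at this
        have h2 : (deriv (C n) (x βb n) - deriv (C n) (x βt n)) ^ 2
            ≤ κ ^ 2 * (d n - s / (N : ℝ)) ^ 2 := by
          have := abs_nonneg (deriv (C n) (x βb n) - deriv (C n) (x βt n))
          nlinarith [sq_abs (deriv (C n) (x βb n) - deriv (C n) (x βt n)),
            sq_abs (d n - s / (N : ℝ)), abs_nonneg (d n - s / (N : ℝ))]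
        have hc2 : (0:ℝ) ≤ (((N : ℝ) - 1) / (N : ℝ)) ^ 2 := sq_nonneg _
        calc (u n) ^ 2 = (((N : ℝ) - 1) / (N : ℝ)) ^ 2
              * (deriv (C n) (x βb n) - deriv (C n) (x βt n)) ^ 2 := by rw [hu]; ring
          _ ≤ (((N : ℝ) - 1) / (N : ℝ)) ^ 2 * (κ ^ 2 * (d n - s / (N : ℝ)) ^ 2) := by
              exact mul_le_mul_of_nonneg_left h2 hc2
          _ = ((((N : ℝ) - 1) / (N : ℝ)) * κ) ^ 2 * (d n - s / (N : ℝ)) ^ 2 := by ring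
      calc ∑ n, (u n) ^ 2
          ≤ ∑ n, ((((N : ℝ) - 1) / (N : ℝ)) * κ) ^ 2 * (d n - s / (N : ℝ)) ^ 2 :=
            Finset.sum_le_sum fun n _ => hptw n
        _ = ((((N : ℝ) - 1) / (N : ℝ)) * κ) ^ 2 * ∑ n, (d n - s / (N : ℝ)) ^ 2 := by
            rw [Finset.mul_sum]
        _ ≤ ((((N : ℝ) - 1) / (N : ℝ)) * κ) ^ 2 * S := by
            apply mul_le_mul_of_nonneg_left _ (sq_nonneg _)
            have hexp : ∑ n, (d n - s / (N : ℝ)) ^ 2 = S - s ^ 2 / (N : ℝ) := by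
              have : ∀ n, (d n - s / (N : ℝ)) ^ 2
                  = d n ^ 2 - 2 * (s / (N : ℝ)) * d n + (s / (N : ℝ)) ^ 2 := by
                intro n; ring
              simp only [this, Finset.sum_add_distrib, Finset.sum_sub_distrib,
                ← Finset.mul_sum, ← hs, ← hS, Finset.sum_const, Finset.card_univ,
                Fintype.card_fin, nsmul_eq_mul]
              field_simp
              ring
            rw [hexp]
            have : 0 ≤ s ^ 2 / (N : ℝ) := by positivity
            linarith
  -- bound on v
  have hvb : Real.sqrt (∑ n, (v n) ^ 2) ≤
      (((N : ℝ) - 1) / (N : ℝ)) * (1 / α) * Real.sqrt S := by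
    apply sqrt_sum_le_of_le
    · have h1 : (0:ℝ) ≤ (N : ℝ) - 1 := by linarith
      positivity
    · have hsumv : ∑ n, (v n) ^ 2 = (s ^ 2 * ((N : ℝ) - 2) + S) / (α ^ 2 * (N : ℝ) ^ 2) := by
        have : ∀ n, (v n) ^ 2 = (s ^ 2 * ((N : ℝ) - 2) ^ 2
            + 2 * s * ((N : ℝ) - 2) * (N : ℝ) * d n + (N : ℝ) ^ 2 * d n ^ 2)
            / (α ^ 2 * (N : ℝ) ^ 4) := by
          intro n; rw [hv]; field_simp; ring
        simp only [this, ← Finset.sum_div, Finset.sum_add_distrib, ← Finset.mul_sum,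
          ← hs, ← hS]
        field_simp
        simp only [Finset.sum_const, Finset.card_univ, Fintype.card_fin, nsmul_eq_mul]
        ring
      rw [hsumv]
      rw [div_le_iff₀ (by positivity)]
      have h1 : s ^ 2 * ((N : ℝ) - 2) ≤ (N : ℝ) * S * ((N : ℝ) - 2) := by
        apply mul_le_mul_of_nonneg_right hCS; linarith
      have key : (N : ℝ) * S * ((N : ℝ) - 2) + S ≤ ((N : ℝ) - 1) ^ 2 * S := by
        nlinarith
      calc s ^ 2 * ((N : ℝ) - 2) + S ≤ ((N : ℝ) - 1) ^ 2 * S := by linarith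
        _ = (((N : ℝ) - 1) / (N : ℝ) * (1 / α)) ^ 2 * S * (α ^ 2 * (N : ℝ) ^ 2) := by
            field_simp
  -- combine
  have hmink : Real.sqrt (∑ n, (F βb n - F βt n) ^ 2)
      ≤ Real.sqrt (∑ n, (u n) ^ 2) + Real.sqrt (∑ n, (v n) ^ 2) := by
    simp only [hFd]
    exact sqrt_sum_add_sq_le u v
  calc Real.sqrt (∑ n, (F βb n - F βt n) ^ 2)
      ≤ Real.sqrt (∑ n, (u n) ^ 2) + Real.sqrt (∑ n, (v n) ^ 2) := hmink
    _ ≤ (((N : ℝ) - 1) / (N : ℝ)) * κ * Real.sqrt S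
        + (((N : ℝ) - 1) / (N : ℝ)) * (1 / α) * Real.sqrt S := add_le_add hub hvb
    _ = (((N : ℝ) - 1) / (N : ℝ)) * (κ + 1 / α) * Real.sqrt (∑ n, (βb n - βt n) ^ 2) := by
        rw [hS]; ring
end

section
/- For every diagonal matrix D = diag(c₁,…,c_N) with 0 ≤ c_n ≤ κ for all n, the symmetric matrix ((N−1)/(2N))(DA + AD) + A_F, where A = I − (1/N)𝟙𝟙ᵀ and A_F = (1/(αN²))(N·I + (N−2)𝟙𝟙ᵀ), has minimum eigenvalue at least 1/(αN) − κ(N−1)/(2N). (This matrix is the symmetric part of the Jacobian of the pseudo-gradient map F when c_n = C''_n(x_n).) -/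
open Matrix

/-- For every diagonal matrix `D = diag(c₁,…,c_N)` with `0 ≤ c_n ≤ κ`, the
symmetric matrix `((N−1)/(2N))(DA + AD) + A_F`, where `A = I − (1/N)𝟙𝟙ᵀ` and
`A_F = (1/(αN²))(N·I + (N−2)𝟙𝟙ᵀ)`, has minimum eigenvalue at least
`1/(αN) − κ(N−1)/(2N)`. -/
theorem jacobian_symmetric_part_eigenvalue_bound
    (N : ℕ) (hN : 2 ≤ N) (α κ : ℝ) (hα : 0 < α) (hκ : 0 < κ)
    (c : Fin N → ℝ) (hc : ∀ n, 0 ≤ c n ∧ c n ≤ κ)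
    (D A AF M : Matrix (Fin N) (Fin N) ℝ)
    (hD : D = Matrix.diagonal c)
    (hA : A = 1 - ((N : ℝ))⁻¹ • Matrix.of (fun _ _ : Fin N => (1 : ℝ)))
    (hAF : AF = (α * (N : ℝ) ^ 2)⁻¹ •
      ((N : ℝ) • (1 : Matrix (Fin N) (Fin N) ℝ)
        + ((N : ℝ) - 2) • Matrix.of (fun _ _ : Fin N => (1 : ℝ))))
    (hM : M = (((N : ℝ) - 1) / (2 * (N : ℝ))) • (D * A + A * D) + AF)
    (hHerm : M.IsHermitian) :
    ∀ i, 1 / (α * (N : ℝ)) - κ * ((N : ℝ) - 1) / (2 * (N : ℝ)) ≤ hHerm.eigenvalues i := by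
  intro i
  have hN0 : (0:ℝ) < (N:ℝ) := by positivity
  have hN2 : (2:ℝ) ≤ (N:ℝ) := by exact_mod_cast hN
  set v : Fin N → ℝ := ⇑(hHerm.eigenvectorBasis i) with hv
  have hnorm : ‖hHerm.eigenvectorBasis i‖ = 1 := hHerm.eigenvectorBasis.orthonormal.1 i
  have hq : ∑ j, v j ^ 2 = 1 := by
    have h := hnorm
    rw [EuclideanSpace.norm_eq] at h
    have h2 : ∑ j, ‖(hHerm.eigenvectorBasis i) j‖ ^ 2 = 1 := Real.sqrt_eq_one.mp h
    simpa [hv, Real.norm_eq_abs, sq_abs] using h2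
  have heig : hHerm.eigenvalues i = v ⬝ᵥ (M *ᵥ v) := by
    have := hHerm.eigenvalues_eq i
    simpa [hv] using this
  set s : ℝ := ∑ j, v j with hs
  set t : ℝ := ∑ j, c j * v j with ht
  set p : ℝ := ∑ j, c j * v j ^ 2 with hp
  have hJ : (Matrix.of (fun _ _ : Fin N => (1:ℝ))) *ᵥ v = fun _ => s := by
    funext k; simp [Matrix.mulVec, dotProduct, hs]
  have hAv : A *ᵥ v = fun k => v k - (N:ℝ)⁻¹ * s := by
    funext k
    simp [hA, Matrix.sub_mulVec, Matrix.mulVec, dotProduct, Matrix.one_apply,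
      sub_mul, ite_mul, Finset.sum_sub_distrib, Finset.sum_ite_eq, ← Finset.mul_sum, hs]
  have hDv : D *ᵥ v = fun k => c k * v k := by
    funext k; simp [hD, Matrix.mulVec_diagonal]
  have hDAv : (D * A) *ᵥ v = fun k => c k * (v k - (N:ℝ)⁻¹ * s) := by
    rw [← Matrix.mulVec_mulVec, hAv]
    funext k; simp [hD, Matrix.mulVec_diagonal]
  have hADv : (A * D) *ᵥ v = fun k => c k * v k - (N:ℝ)⁻¹ * t := by
    rw [← Matrix.mulVec_mulVec, hDv]
    funext k
    simp [hA, Matrix.sub_mulVec, Matrix.mulVec, dotProduct, Matrix.one_apply,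
      sub_mul, ite_mul, Finset.sum_sub_distrib, Finset.sum_ite_eq, ← Finset.mul_sum, ht]
  have hAFv : AF *ᵥ v = fun k => (α * (N:ℝ)^2)⁻¹ * ((N:ℝ) * v k + ((N:ℝ) - 2) * s) := by
    funext k
    rw [hAF, Matrix.smul_mulVec, Matrix.add_mulVec, Matrix.smul_mulVec,
      Matrix.smul_mulVec, Matrix.one_mulVec, hJ]
    simp [smul_eq_mul]
  have hquad : v ⬝ᵥ (M *ᵥ v) =
      (((N:ℝ) - 1) / (2 * (N:ℝ))) * ((p - (N:ℝ)⁻¹ * s * t) + (p - (N:ℝ)⁻¹ * s * t))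
        + (α * (N:ℝ)^2)⁻¹ * ((N:ℝ) * 1) + (α * (N:ℝ)^2)⁻¹ * (((N:ℝ) - 2) * s^2) := by
    rw [hM, Matrix.add_mulVec, Matrix.smul_mulVec, Matrix.add_mulVec,
      dotProduct_add, dotProduct_smul, dotProduct_add,
      hDAv, hADv, hAFv]
    have e1 : v ⬝ᵥ (fun k => c k * (v k - (N:ℝ)⁻¹ * s)) = p - (N:ℝ)⁻¹ * s * t := by
      have hterm : ∀ k : Fin N, v k * (c k * (v k - (N:ℝ)⁻¹ * s))
          = c k * v k ^ 2 - (N:ℝ)⁻¹ * s * (c k * v k) := fun k => by ring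
      simp only [dotProduct, hterm, Finset.sum_sub_distrib, ← Finset.mul_sum, ← hp, ← ht]
    have e2 : v ⬝ᵥ (fun k => c k * v k - (N:ℝ)⁻¹ * t) = p - (N:ℝ)⁻¹ * s * t := by
      have hterm : ∀ k : Fin N, v k * (c k * v k - (N:ℝ)⁻¹ * t)
          = c k * v k ^ 2 - (N:ℝ)⁻¹ * t * v k := fun k => by ring
      simp only [dotProduct, hterm, Finset.sum_sub_distrib, ← Finset.mul_sum, ← hp, ← hs]
      ring
    have e3 : v ⬝ᵥ (fun k => (α * (N:ℝ)^2)⁻¹ * ((N:ℝ) * v k + ((N:ℝ) - 2) * s)) =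
        (α * (N:ℝ)^2)⁻¹ * ((N:ℝ) * 1) + (α * (N:ℝ)^2)⁻¹ * (((N:ℝ) - 2) * s^2) := by
      have hterm : ∀ k : Fin N, v k * ((α * (N:ℝ)^2)⁻¹ * ((N:ℝ) * v k + ((N:ℝ) - 2) * s))
          = (α * (N:ℝ)^2)⁻¹ * (N:ℝ) * v k ^ 2 + (α * (N:ℝ)^2)⁻¹ * ((N:ℝ) - 2) * s * v k :=
        fun k => by ring
      simp only [dotProduct, hterm, Finset.sum_add_distrib, ← Finset.mul_sum, hq, ← hs]
      ring
    rw [e1, e2, e3]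
    simp only [smul_eq_mul]
    ring
  -- inequalities
  have hs2 : s ^ 2 ≤ (N:ℝ) := by
    have := sq_sum_le_card_mul_sum_sq (s := Finset.univ) (f := v)
    simpa [hq, hs] using this
  have hC0 : (0:ℝ) ≤ ∑ j, c j := Finset.sum_nonneg fun j _ => (hc j).1
  have hCk : ∑ j, c j ≤ (N:ℝ) * κ := by
    calc ∑ j, c j ≤ ∑ _j : Fin N, κ := Finset.sum_le_sum fun j _ => (hc j).2
    _ = (N:ℝ) * κ := by simp [mul_comm]
  have hsq0 : (0:ℝ) ≤ ∑ j, c j * (v j - (N:ℝ)⁻¹ * s / 2)^2 :=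
    Finset.sum_nonneg fun j _ => mul_nonneg (hc j).1 (sq_nonneg _)
  have hid : ∑ j, c j * (v j - (N:ℝ)⁻¹ * s / 2)^2
      = p - (N:ℝ)⁻¹ * s * t + ((N:ℝ)⁻¹ * s / 2)^2 * ∑ j, c j := by
    have hterm : ∀ j : Fin N, c j * (v j - (N:ℝ)⁻¹ * s / 2)^2
        = c j * v j ^ 2 - (N:ℝ)⁻¹ * s * (c j * v j) + ((N:ℝ)⁻¹ * s / 2)^2 * c j :=
      fun j => by ring
    simp only [hterm, Finset.sum_add_distrib, Finset.sum_sub_distrib, ← Finset.mul_sum, ← hp, ← ht]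
  have hu : (N:ℝ)⁻¹ * (N:ℝ) = 1 := inv_mul_cancel₀ hN0.ne'
  have h1 : ((N:ℝ)⁻¹ * s / 2)^2 * (∑ j, c j) ≤ ((N:ℝ)⁻¹ * s / 2)^2 * ((N:ℝ) * κ) :=
    mul_le_mul_of_nonneg_left hCk (sq_nonneg _)
  have h2 : ((N:ℝ)⁻¹ * s / 2)^2 * ((N:ℝ) * κ)
      = (N:ℝ)⁻¹ * κ * s^2 / 4 * ((N:ℝ)⁻¹ * (N:ℝ)) := by ring
  have h2' : ((N:ℝ)⁻¹ * s / 2)^2 * ((N:ℝ) * κ) = (N:ℝ)⁻¹ * κ * s^2 / 4 := by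
    rw [h2, hu, mul_one]
  have h3 : (N:ℝ)⁻¹ * κ * s^2 ≤ (N:ℝ)⁻¹ * κ * (N:ℝ) :=
    mul_le_mul_of_nonneg_left hs2 (by positivity)
  have h4 : (N:ℝ)⁻¹ * κ * (N:ℝ) = κ := by
    rw [mul_comm ((N:ℝ)⁻¹) κ, mul_assoc, hu, mul_one]
  have hkey : -(κ/2) ≤ p - (N:ℝ)⁻¹ * s * t := by linarith
  rw [heig, hquad]
  have hcoef0 : (0:ℝ) ≤ ((N:ℝ) - 1) / (2 * (N:ℝ)) := by
    apply div_nonneg <;> linarith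
  have hB := mul_le_mul_of_nonneg_left (show -(κ/2) + -(κ/2) ≤ (p - (N:ℝ)⁻¹ * s * t) + (p - (N:ℝ)⁻¹ * s * t) by linarith) hcoef0
  have hBeq : ((N:ℝ) - 1) / (2 * (N:ℝ)) * (-(κ/2) + -(κ/2)) = -(κ * ((N:ℝ) - 1) / (2 * (N:ℝ))) := by
    ring
  have hE : (α * (N:ℝ)^2)⁻¹ * ((N:ℝ) * 1) = 1 / (α * (N:ℝ)) := by
    field_simp
  have hF : (0:ℝ) ≤ (α * (N:ℝ)^2)⁻¹ * (((N:ℝ) - 2) * s^2) := by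
    apply mul_nonneg (by positivity)
    exact mul_nonneg (by linarith) (sq_nonneg _)
  linarith
end

section
/- Assume α < 2/(κ(N−1)) and let K ⊆ ℝ^N be a nonempty, closed, convex set. Then there exists a unique β* ∈ K such that (β − β*)ᵀF(β*) ≥ 0 for all β ∈ K; that is, the variational inequality VI(K, F) has a unique solution (the unique variational Generalized Nash Equilibrium of the flexibility game). -/
open RealInnerProductSpace

private theorem pern_mono (κ N s Δ A d : ℝ) (hκ : 0 < κ) (hN : 0 < N) (hd : d = A + s/N)
    (h1 : 0 ≤ Δ*A) (h2 : |Δ| ≤ κ*|A|) : -(κ*s^2) ≤ 4*N^2*(Δ*d) := by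
  have h3 : Δ^2 ≤ κ*(Δ*A) := by
    calc Δ^2 = |Δ| * |Δ| := by rw [abs_mul_abs_self]; ring
      _ ≤ (κ*|A|) * |Δ| := mul_le_mul_of_nonneg_right h2 (abs_nonneg _)
      _ = κ * |A * Δ| := by rw [abs_mul]; ring
      _ = κ * (Δ * A) := by rw [mul_comm A Δ, abs_of_nonneg h1]
  have h5' : -(|s| * |Δ|) ≤ s*Δ := by
    have := neg_abs_le (s*Δ)
    rw [abs_mul] at this
    exact this
  have key : -(κ*(κ*s^2)) ≤ κ*(4*N^2*(Δ*d)) := by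
    have e : κ*(4*N^2*(Δ*d)) = 4*N^2*(κ*(Δ*A)) + 4*N*κ*(s*Δ) := by
      rw [hd]; field_simp
    have e1 : 4*N^2*Δ^2 ≤ 4*N^2*(κ*(Δ*A)) :=
      mul_le_mul_of_nonneg_left h3 (by positivity)
    have e2 : -(4*N*κ*(|s| * |Δ|)) ≤ 4*N*κ*(s*Δ) := by
      have := mul_le_mul_of_nonneg_left h5' (show (0:ℝ) ≤ 4*N*κ by positivity)
      linarith
    have e3 : -(κ^2*s^2) ≤ 4*N^2*Δ^2 - 4*N*κ*(|s| * |Δ|) := by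
      nlinarith [sq_nonneg (2*N*|Δ| - κ*|s|), sq_abs Δ, sq_abs s]
    linarith
  nlinarith [key, hκ]

private theorem sq3 (X Y Z : ℝ) : (X+Y+Z)^2 ≤ 3*X^2+3*Y^2+3*Z^2 := by
  nlinarith [sq_nonneg (X-Y), sq_nonneg (Y-Z), sq_nonneg (X-Z)]

theorem VI_aux {E : Type*} [NormedAddCommGroup E] [InnerProductSpace ℝ E] [CompleteSpace E]
    (K : Set E) (hne : K.Nonempty) (hcl : IsClosed K) (hconv : Convex ℝ K)
    (F : E → E) (μ L2 : ℝ) (hμ : 0 < μ) (hL2 : 0 ≤ L2)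
    (hmono : ∀ u v, μ * ‖u - v‖ ^ 2 ≤ ⟪F u - F v, u - v⟫)
    (hlip : ∀ u v, ‖F u - F v‖ ^ 2 ≤ L2 * ‖u - v‖ ^ 2) :
    ∃! u : E, u ∈ K ∧ ∀ w ∈ K, 0 ≤ ⟪F u, w - u⟫ := by
  have hKc : IsComplete K := hcl.isComplete
  have proj : ∀ u : E, ∃ v, v ∈ K ∧ ∀ w ∈ K, ⟪u - v, w - v⟫ ≤ 0 := by
    intro u
    obtain ⟨v, hvK, hv⟩ := exists_norm_eq_iInf_of_complete_convex hne hKc hconv u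
    exact ⟨v, hvK, (norm_eq_iInf_iff_real_inner_le_zero hconv hvK).1 hv⟩
  choose P hPK hP using proj
  have hPnon : ∀ u u', ‖P u - P u'‖ ≤ ‖u - u'‖ := by
    intro u u'
    have e1 : ⟪u - P u, P u' - P u⟫ ≤ 0 := hP u (P u') (hPK u')
    have e2 : ⟪u' - P u', P u - P u'⟫ ≤ 0 := hP u' (P u) (hPK u)
    have e1' : 0 ≤ ⟪u - P u, P u - P u'⟫ := by
      rw [show P u' - P u = -(P u - P u') by abel, inner_neg_right] at e1
      linarith
    have key : ‖P u - P u'‖ ^ 2 ≤ ⟪u - u', P u - P u'⟫ := by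
      have hd : ⟪u - u', P u - P u'⟫
          = ⟪u - P u, P u - P u'⟫ - ⟪u' - P u', P u - P u'⟫
            + ⟪P u - P u', P u - P u'⟫ := by
        rw [← inner_sub_left, ← inner_add_left]
        congr 1
        abel
      rw [hd, real_inner_self_eq_norm_sq]
      linarith
    have hcs := real_inner_le_norm (u - u') (P u - P u')
    rcases eq_or_lt_of_le (norm_nonneg (P u - P u')) with h | h
    · rw [← h]; exact norm_nonneg _
    · nlinarith
  set M : ℝ := L2 + μ ^ 2 + 1 with hM
  have hMpos : 0 < M := by positivity
  set γ : ℝ := μ / M with hγdef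
  have hγ : 0 < γ := by positivity
  have hγM : γ * M = μ := div_mul_cancel₀ μ (ne_of_gt hMpos)
  set θ : ℝ := 1 - γ * μ with hθdef
  have hθ0 : 0 ≤ θ := by
    have : γ * μ ≤ 1 := by
      rw [hγdef, div_mul_eq_mul_div, div_le_one hMpos]
      nlinarith
    linarith
  have hθ1 : θ < 1 := by
    have : 0 < γ * μ := mul_pos hγ hμ
    simp only [hθdef]; linarith
  have hcontr : ∀ u v : E, ‖P (u - γ • F u) - P (v - γ • F v)‖ ≤ Real.sqrt θ * ‖u - v‖ := by
    intro u v
    have hsq : ‖(u - γ • F u) - (v - γ • F v)‖ ^ 2 ≤ θ * ‖u - v‖ ^ 2 := by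
      have hrw : (u - γ • F u) - (v - γ • F v) = (u - v) - γ • (F u - F v) := by
        rw [smul_sub]; abel
      rw [hrw, norm_sub_sq_real, real_inner_smul_right, norm_smul]
      have hI := hmono u v
      rw [real_inner_comm] at hI
      have hS := hlip u v
      have hP2 : (0:ℝ) ≤ ‖u - v‖ ^ 2 := by positivity
      have h1 : γ ^ 2 * ‖F u - F v‖ ^ 2 ≤ γ ^ 2 * (L2 * ‖u - v‖ ^ 2) :=
        mul_le_mul_of_nonneg_left hS (by positivity)
      have h2 : γ ^ 2 * L2 ≤ γ * μ := by
        have h2a : γ * L2 ≤ γ * M := by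
          apply mul_le_mul_of_nonneg_left _ (le_of_lt hγ)
          nlinarith
        calc γ ^ 2 * L2 = γ * (γ * L2) := by ring
          _ ≤ γ * (γ * M) := mul_le_mul_of_nonneg_left h2a (le_of_lt hγ)
          _ = γ * μ := by rw [hγM]
      rw [Real.norm_eq_abs, abs_of_pos hγ]
      have hA : γ * (μ * ‖u - v‖ ^ 2) ≤ γ * ⟪u - v, F u - F v⟫ :=
        mul_le_mul_of_nonneg_left hI hγ.le
      have hB : (γ * ‖F u - F v‖) ^ 2 ≤ γ * μ * ‖u - v‖ ^ 2 := by
        have hBe : (γ * ‖F u - F v‖) ^ 2 = γ ^ 2 * ‖F u - F v‖ ^ 2 := by ring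
        rw [hBe]
        calc γ ^ 2 * ‖F u - F v‖ ^ 2 ≤ γ ^ 2 * (L2 * ‖u - v‖ ^ 2) := h1
          _ = γ ^ 2 * L2 * ‖u - v‖ ^ 2 := by ring
          _ ≤ γ * μ * ‖u - v‖ ^ 2 := mul_le_mul_of_nonneg_right h2 hP2
      nlinarith [hA, hB, hP2]
    have hkey := hPnon (u - γ • F u) (v - γ • F v)
    refine hkey.trans ?_
    have h4 : ‖(u - γ • F u) - (v - γ • F v)‖
        = Real.sqrt (‖(u - γ • F u) - (v - γ • F v)‖ ^ 2) :=
      (Real.sqrt_sq (norm_nonneg _)).symm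
    rw [h4]
    refine (Real.sqrt_le_sqrt hsq).trans ?_
    rw [Real.sqrt_mul hθ0, Real.sqrt_sq (norm_nonneg _)]
  haveI : Nonempty K := hne.to_subtype
  haveI : CompleteSpace K := hcl.completeSpace_coe
  set c : NNReal := ⟨Real.sqrt θ, Real.sqrt_nonneg _⟩ with hc
  have hc1 : c < 1 := by
    rw [← NNReal.coe_lt_coe]
    show Real.sqrt θ < 1
    calc Real.sqrt θ < Real.sqrt 1 := Real.sqrt_lt_sqrt hθ0 hθ1
      _ = 1 := Real.sqrt_one
  set T : K → K := fun p => ⟨P ((p : E) - γ • F p), hPK _⟩ with hT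
  have hTlip : LipschitzWith c T := by
    apply LipschitzWith.of_dist_le_mul
    intro p q
    simp only [Subtype.dist_eq, dist_eq_norm]
    exact hcontr p q
  have hcw : ContractingWith c T := ⟨hc1, hTlip⟩
  obtain ⟨p, hpfix⟩ : ∃ p : K, T p = p := ⟨hcw.fixedPoint T, hcw.fixedPoint_isFixedPt⟩
  have hfixE : P ((p : E) - γ • F p) = (p : E) := congrArg Subtype.val hpfix
  have hVI : ∀ w ∈ K, 0 ≤ ⟪F (p : E), w - p⟫ := by
    intro w hw
    have h5 := hP ((p : E) - γ • F p) w hw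
    rw [hfixE] at h5
    rw [show (p : E) - γ • F p - p = -(γ • F (p : E)) by abel, inner_neg_left,
      real_inner_smul_left] at h5
    have h6 : 0 ≤ γ * ⟪F (p : E), w - p⟫ := by linarith
    exact (mul_nonneg_iff_of_pos_left hγ).mp h6
  refine ⟨p, ⟨p.2, hVI⟩, ?_⟩
  intro y hy
  have h1 := hy.2 (p : E) p.2
  have h2 := hVI y hy.1
  have h3 := hmono y (p : E)
  have h4 : ⟪F y - F (p : E), y - p⟫ = -⟪F y, (p : E) - y⟫ - ⟪F (p : E), y - p⟫ := by
    rw [inner_sub_left, show (p : E) - y = -(y - (p : E)) by abel, inner_neg_right]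
    ring
  have h5 : μ * ‖y - (p : E)‖ ^ 2 ≤ 0 := by rw [h4] at h3; linarith
  have h6 : ‖y - (p : E)‖ ^ 2 ≤ 0 := by nlinarith
  have h7 : ‖y - (p : E)‖ = 0 := by nlinarith [norm_nonneg (y - (p : E))]
  exact sub_eq_zero.mp (norm_eq_zero.mp h7)


set_option maxHeartbeats 1000000 in

/-- Assume `α < 2/(κ(N−1))` and let `K ⊆ ℝ^N` be nonempty, closed and convex.
Then there exists a unique `β* ∈ K` such that `(β − β*)ᵀ F(β*) ≥ 0` for all `β ∈ K`;
i.e. the variational inequality `VI(K, F)` has a unique solution (the unique v-GNE). -/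
theorem vGNE_exists_unique
    (N : ℕ) (hN : 2 ≤ N) (α κ xtot : ℝ) (hα : 0 < α) (hκ : 0 < κ)
    (C : Fin N → ℝ → ℝ)
    (hC2 : ∀ n, ContDiff ℝ 2 (C n))
    (hCconv : ∀ n, ConvexOn ℝ Set.univ (C n))
    (hClip : ∀ n, ∀ y y' : ℝ, |deriv (C n) y' - deriv (C n) y| ≤ κ * |y' - y|)
    (x : (Fin N → ℝ) → Fin N → ℝ)
    (hx : ∀ β n, x β n = (xtot - ∑ m, β m) / (N : ℝ) + β n)
    (F : (Fin N → ℝ) → Fin N → ℝ)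
    (hF : ∀ β n, F β n =
      (((N : ℝ) - 1) / (N : ℝ)) * deriv (C n) (x β n)
        + (((∑ m, β m) - xtot) * ((N : ℝ) - 2) + (N : ℝ) * β n) / (α * (N : ℝ) ^ 2))
    (hαlt : α < 2 / (κ * ((N : ℝ) - 1)))
    (K : Set (Fin N → ℝ)) (hKne : K.Nonempty) (hKcl : IsClosed K) (hKconv : Convex ℝ K) :
    ∃! βs : Fin N → ℝ, βs ∈ K ∧ ∀ β ∈ K, 0 ≤ ∑ n, (β n - βs n) * F βs n := by
  have hNR : (2:ℝ) ≤ (N:ℝ) := by exact_mod_cast hN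
  have hN0 : (0:ℝ) < (N:ℝ) := by linarith
  have hNne : (N:ℝ) ≠ 0 := ne_of_gt hN0
  have hαne : α ≠ 0 := ne_of_gt hα
  have hκN : (0:ℝ) < κ * ((N:ℝ)-1) := by nlinarith
  have hα2 : α * (κ * ((N:ℝ)-1)) < 2 := (lt_div_iff₀ hκN).mp hαlt
  have hακ : α * κ < 2 := by nlinarith
  have hq : 0 < 1/α - κ/4 := by
    rw [sub_pos]
    rw [div_lt_div_iff₀ (by norm_num) hα]
    nlinarith
  set μ : ℝ := min (1/(α*(N:ℝ))) (((N:ℝ)-1)/(N:ℝ) * (1/α - κ/4)) with hμdef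
  have hμpos : 0 < μ :=
    lt_min (by positivity) (mul_pos (div_pos (by linarith) hN0) hq)
  set Q : ℝ := 12*α^2*((N:ℝ)-1)^2*κ^2*(N:ℝ)^2 + 3*((N:ℝ)-2)^2*(N:ℝ)^2 + 3*(N:ℝ)^2 with hQdef
  set L2 : ℝ := Q / (α^2*(N:ℝ)^4) with hL2def
  have hQnn : 0 ≤ Q := by positivity
  have hL2nn : 0 ≤ L2 := by positivity
  have hdiff : ∀ n, Differentiable ℝ (C n) := fun n => (hC2 n).differentiable (by norm_num)
  have hmonoC : ∀ n, Monotone (deriv (C n)) := fun n =>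
    monotoneOn_univ.mp ((hCconv n).monotoneOn_deriv (fun y _ => (hdiff n).differentiableAt))
  -- pairwise difference formulas
  have hxa : ∀ (u v : Fin N → ℝ) (n : Fin N),
      x u n - x v n = (u n - v n) - (∑ m, (u m - v m))/(N:ℝ) := by
    intro u v n
    rw [hx u n, hx v n, Finset.sum_sub_distrib]
    field_simp
    ring
  have hFd : ∀ (u v : Fin N → ℝ) (n : Fin N), F u n - F v n =
      ((N:ℝ)-1)/(N:ℝ) * (deriv (C n) (x u n) - deriv (C n) (x v n))
        + ((N:ℝ)-2)/(α*(N:ℝ)^2) * (∑ m, (u m - v m)) + (1/(α*(N:ℝ))) * (u n - v n) := by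
    intro u v n
    rw [hF u n, hF v n, Finset.sum_sub_distrib]
    field_simp
    ring
  -- F viewed on Euclidean space
  let F' : EuclideanSpace ℝ (Fin N) → EuclideanSpace ℝ (Fin N) :=
    fun β => WithLp.toLp 2 (F β)
  have hF'app : ∀ (β : EuclideanSpace ℝ (Fin N)) (n : Fin N), F' β n = F β n := fun _ _ => rfl
  have hnormsq : ∀ w : EuclideanSpace ℝ (Fin N), ‖w‖^2 = ∑ n, (w n)^2 := by
    intro w
    rw [← real_inner_self_eq_norm_sq, PiLp.inner_apply]
    simp [RCLike.inner_apply, sq]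
  -- strong monotonicity
  have hmonoF : ∀ u v : EuclideanSpace ℝ (Fin N),
      μ * ‖u - v‖^2 ≤ ⟪F' u - F' v, u - v⟫ := by
    intro u v
    have hPnn : (0:ℝ) ≤ ∑ n, (u n - v n)^2 := Finset.sum_nonneg fun n _ => sq_nonneg _
    have hnorm : ‖u - v‖^2 = ∑ n, (u n - v n)^2 := by
      rw [hnormsq]; simp
    have hinner : ⟪F' u - F' v, u - v⟫ = ∑ n, (F u n - F v n) * (u n - v n) := by
      rw [PiLp.inner_apply]
      simp [RCLike.inner_apply, F']
      exact Finset.sum_congr rfl fun n _ => mul_comm _ _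
    have hsumper : -((N:ℝ)*(κ*(∑ m, (u m - v m))^2)) ≤
        4*(N:ℝ)^2*(∑ n, (deriv (C n) (x u n) - deriv (C n) (x v n)) * (u n - v n)) := by
      rw [Finset.mul_sum]
      have hb := Finset.sum_le_sum (s := Finset.univ)
        (f := fun _ : Fin N => -(κ*(∑ m, (u m - v m))^2))
        (g := fun n => 4*(N:ℝ)^2*((deriv (C n) (x u n) - deriv (C n) (x v n)) * (u n - v n)))
        (fun n _ => by
          apply pern_mono κ (N:ℝ) (∑ m, (u m - v m)) _ (x u n - x v n) (u n - v n) hκ hN0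
          · rw [hxa u v n]; ring
          · rcases le_total (x v n) (x u n) with h | h
            · exact mul_nonneg (sub_nonneg.mpr (hmonoC n h)) (sub_nonneg.mpr h)
            · have hx1 := sub_nonpos.mpr (hmonoC n h)
              have hx2 := sub_nonpos.mpr h
              nlinarith [mul_nonneg (neg_nonneg.mpr hx1) (neg_nonneg.mpr hx2)]
          · exact hClip n (x v n) (x u n))
      calc -((N:ℝ)*(κ*(∑ m, (u m - v m))^2))
          = ∑ _n : Fin N, -(κ*(∑ m, (u m - v m))^2) := by
            rw [Finset.sum_const, Finset.card_univ, Fintype.card_fin, nsmul_eq_mul]; ring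
        _ ≤ _ := hb
    have hsper2 : -(κ*(∑ m, (u m - v m))^2) ≤
        4*(N:ℝ)*(∑ n, (deriv (C n) (x u n) - deriv (C n) (x v n)) * (u n - v n)) := by
      nlinarith [hsumper, hN0]
    have hcheb : (∑ m, (u m - v m))^2 ≤ (N:ℝ) * ∑ n, (u n - v n)^2 := by
      have := sq_sum_le_card_mul_sum_sq (s := Finset.univ) (f := fun m => u m - v m)
      simpa using this
    have hsplit : ∑ n, (F u n - F v n) * (u n - v n)
        = ((N:ℝ)-1)/(N:ℝ) * (∑ n, (deriv (C n) (x u n) - deriv (C n) (x v n)) * (u n - v n))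
          + ((N:ℝ)-2)/(α*(N:ℝ)^2) * (∑ m, (u m - v m))^2
          + (1/(α*(N:ℝ))) * (∑ n, (u n - v n)^2) := by
      calc ∑ n, (F u n - F v n) * (u n - v n)
          = ∑ n, (((N:ℝ)-1)/(N:ℝ) * ((deriv (C n) (x u n) - deriv (C n) (x v n)) * (u n - v n))
              + (((N:ℝ)-2)/(α*(N:ℝ)^2) * (∑ m, (u m - v m))) * (u n - v n)
              + (1/(α*(N:ℝ))) * (u n - v n)^2) :=
            Finset.sum_congr rfl (fun n _ => by rw [hFd u v n]; ring)
        _ = _ := by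
            rw [Finset.sum_add_distrib, Finset.sum_add_distrib,
              ← Finset.mul_sum, ← Finset.mul_sum, ← Finset.mul_sum]
            ring
    rw [hnorm, hinner, hsplit]
    have hμ1 : μ ≤ 1/(α*(N:ℝ)) := min_le_left _ _
    have hμ2 : μ ≤ ((N:ℝ)-1)/(N:ℝ)*(1/α - κ/4) := min_le_right _ _
    set s := ∑ m, (u m - v m) with hsdef
    set TT := ∑ n, (deriv (C n) (x u n) - deriv (C n) (x v n)) * (u n - v n) with hTTdef
    set PP := ∑ n, (u n - v n)^2 with hPPdef
    clear_value s TT PP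
    have hmain : 4*α*(N:ℝ)^2*(μ*PP) ≤
        4*α*(N:ℝ)^2*(((N:ℝ)-1)/(N:ℝ)*TT + ((N:ℝ)-2)/(α*(N:ℝ)^2)*s^2 + (1/(α*(N:ℝ)))*PP) := by
      have hid : 4*α*(N:ℝ)^2*(((N:ℝ)-1)/(N:ℝ)*TT + ((N:ℝ)-2)/(α*(N:ℝ)^2)*s^2 + (1/(α*(N:ℝ)))*PP)
          = 4*α*((N:ℝ)-1)*(N:ℝ)*TT + 4*((N:ℝ)-2)*s^2 + 4*(N:ℝ)*PP := by
        field_simp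
      rw [hid]
      have f1 : α*((N:ℝ)-1)*(-(κ*s^2)) ≤ α*((N:ℝ)-1)*(4*(N:ℝ)*TT) :=
        mul_le_mul_of_nonneg_left hsper2 (mul_nonneg hα.le (by linarith))
      rcases le_or_gt 0 (4*((N:ℝ)-2) - α*((N:ℝ)-1)*κ) with hB | hB
      · have f2 : 0 ≤ (4*((N:ℝ)-2) - α*((N:ℝ)-1)*κ)*s^2 := mul_nonneg hB (sq_nonneg s)
        have f3 : 4*α*(N:ℝ)^2*μ ≤ 4*(N:ℝ) := by
          have g := mul_le_mul_of_nonneg_left hμ1 (show (0:ℝ) ≤ 4*α*(N:ℝ)^2 by positivity)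
          have e : 4*α*(N:ℝ)^2*(1/(α*(N:ℝ))) = 4*(N:ℝ) := by field_simp
          linarith
        have f4 : 4*α*(N:ℝ)^2*(μ*PP) ≤ 4*(N:ℝ)*PP := by
          have := mul_le_mul_of_nonneg_right f3 hPnn
          linarith [this]
        linarith [f1, f2, f4]
      · have f2 : (4*((N:ℝ)-2) - α*((N:ℝ)-1)*κ)*((N:ℝ)*PP)
            ≤ (4*((N:ℝ)-2) - α*((N:ℝ)-1)*κ)*s^2 :=
          mul_le_mul_of_nonpos_left hcheb hB.le
        have f3 : 4*α*(N:ℝ)^2*μ ≤ (N:ℝ)*((N:ℝ)-1)*(4 - α*κ) := by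
          have g := mul_le_mul_of_nonneg_left hμ2 (show (0:ℝ) ≤ 4*α*(N:ℝ)^2 by positivity)
          have e : 4*α*(N:ℝ)^2*(((N:ℝ)-1)/(N:ℝ)*(1/α - κ/4)) = (N:ℝ)*((N:ℝ)-1)*(4 - α*κ) := by
            field_simp
          linarith
        have f4 := mul_le_mul_of_nonneg_right f3 hPnn
        linarith [f1, f2, f4]
    have hpos : (0:ℝ) < 4*α*(N:ℝ)^2 := by positivity
    exact le_of_mul_le_mul_left hmain hpos
  -- Lipschitz bound
  have hlipF : ∀ u v : EuclideanSpace ℝ (Fin N),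
      ‖F' u - F' v‖^2 ≤ L2 * ‖u - v‖^2 := by
    intro u v
    have hPnn : (0:ℝ) ≤ ∑ n, (u n - v n)^2 := Finset.sum_nonneg fun n _ => sq_nonneg _
    have hnorm : ‖u - v‖^2 = ∑ n, (u n - v n)^2 := by rw [hnormsq]; simp
    have hnormF : ‖F' u - F' v‖^2 = ∑ n, (F u n - F v n)^2 := by
      rw [hnormsq]
      simp [F']
    have hpern : ∀ n : Fin N, α^2*(N:ℝ)^4*(F u n - F v n)^2 ≤
        6*α^2*((N:ℝ)-1)^2*κ^2*((N:ℝ)^2*(u n - v n)^2 + (∑ m, (u m - v m))^2)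
          + 3*((N:ℝ)-2)^2*(∑ m, (u m - v m))^2 + 3*(N:ℝ)^2*(u n - v n)^2 := by
      intro n
      have e : α*(N:ℝ)^2*(F u n - F v n)
          = α*(N:ℝ)*((N:ℝ)-1)*(deriv (C n) (x u n) - deriv (C n) (x v n))
            + ((N:ℝ)-2)*(∑ m, (u m - v m)) + (N:ℝ)*(u n - v n) := by
        rw [hFd u v n]
        field_simp
      have e2 : α^2*(N:ℝ)^4*(F u n - F v n)^2
          = (α*(N:ℝ)*((N:ℝ)-1)*(deriv (C n) (x u n) - deriv (C n) (x v n))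
            + ((N:ℝ)-2)*(∑ m, (u m - v m)) + (N:ℝ)*(u n - v n))^2 := by
        rw [← e]; ring
      have hΔ2 : (deriv (C n) (x u n) - deriv (C n) (x v n))^2 ≤ κ^2*(x u n - x v n)^2 := by
        have h2 : |deriv (C n) (x u n) - deriv (C n) (x v n)| ≤ κ*|x u n - x v n| :=
          hClip n (x v n) (x u n)
        calc (deriv (C n) (x u n) - deriv (C n) (x v n))^2
            = |deriv (C n) (x u n) - deriv (C n) (x v n)|
              * |deriv (C n) (x u n) - deriv (C n) (x v n)| := by rw [abs_mul_abs_self]; ring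
          _ ≤ (κ*|x u n - x v n|)*(κ*|x u n - x v n|) :=
              mul_le_mul h2 h2 (abs_nonneg _) (by positivity)
          _ = κ^2*|x u n - x v n|^2 := by ring
          _ = κ^2*(x u n - x v n)^2 := by rw [sq_abs]
      have hA : (N:ℝ)*(x u n - x v n) = (N:ℝ)*(u n - v n) - (∑ m, (u m - v m)) := by
        rw [hxa u v n]
        field_simp
      have hA2 : (N:ℝ)^2*(x u n - x v n)^2
          ≤ 2*(N:ℝ)^2*(u n - v n)^2 + 2*(∑ m, (u m - v m))^2 := by
        have hsq : ((N:ℝ)*(x u n - x v n))^2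
            = ((N:ℝ)*(u n - v n) - (∑ m, (u m - v m)))^2 := by rw [hA]
        nlinarith [hsq, sq_nonneg ((N:ℝ)*(u n - v n) + (∑ m, (u m - v m)))]
      rw [e2]
      have h3 := sq3 (α*(N:ℝ)*((N:ℝ)-1)*(deriv (C n) (x u n) - deriv (C n) (x v n)))
        (((N:ℝ)-2)*(∑ m, (u m - v m))) ((N:ℝ)*(u n - v n))
      have g1 : 3*α^2*((N:ℝ)-1)^2*(N:ℝ)^2*(deriv (C n) (x u n) - deriv (C n) (x v n))^2
          ≤ 3*α^2*((N:ℝ)-1)^2*(N:ℝ)^2*(κ^2*(x u n - x v n)^2) :=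
        mul_le_mul_of_nonneg_left hΔ2 (by positivity)
      have g2 : 3*α^2*((N:ℝ)-1)^2*κ^2*((N:ℝ)^2*(x u n - x v n)^2)
          ≤ 3*α^2*((N:ℝ)-1)^2*κ^2*(2*(N:ℝ)^2*(u n - v n)^2 + 2*(∑ m, (u m - v m))^2) :=
        mul_le_mul_of_nonneg_left hA2 (by positivity)
      linarith [h3, g1, g2]
    have hsums : α^2*(N:ℝ)^4*(∑ n, (F u n - F v n)^2) ≤
        6*α^2*((N:ℝ)-1)^2*κ^2*((N:ℝ)^2*(∑ n, (u n - v n)^2) + (N:ℝ)*(∑ m, (u m - v m))^2)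
          + 3*((N:ℝ)-2)^2*((N:ℝ)*(∑ m, (u m - v m))^2)
          + 3*(N:ℝ)^2*(∑ n, (u n - v n)^2) := by
      have hb := Finset.sum_le_sum (s := Finset.univ) (fun n _ => hpern n)
      rw [← Finset.mul_sum] at hb
      refine hb.trans (le_of_eq ?_)
      rw [Finset.sum_add_distrib, Finset.sum_add_distrib,
        ← Finset.mul_sum, ← Finset.mul_sum, Finset.sum_add_distrib,
        ← Finset.mul_sum, ← Finset.mul_sum,
        Finset.sum_const, Finset.card_univ, Fintype.card_fin, nsmul_eq_mul]
      try ring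
    have hcheb : (∑ m, (u m - v m))^2 ≤ (N:ℝ) * ∑ n, (u n - v n)^2 := by
      have := sq_sum_le_card_mul_sum_sq (s := Finset.univ) (f := fun m => u m - v m)
      simpa using this
    rw [hnormF, hnorm, hL2def, div_mul_eq_mul_div, le_div_iff₀ (by positivity : (0:ℝ) < α^2*(N:ℝ)^4)]
    have g1 : (N:ℝ)*(∑ m, (u m - v m))^2 ≤ (N:ℝ)*((N:ℝ)*(∑ n, (u n - v n)^2)) :=
      mul_le_mul_of_nonneg_left hcheb (le_of_lt hN0)
    have g2 : 6*α^2*((N:ℝ)-1)^2*κ^2*((N:ℝ)*(∑ m, (u m - v m))^2)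
        ≤ 6*α^2*((N:ℝ)-1)^2*κ^2*((N:ℝ)*((N:ℝ)*(∑ n, (u n - v n)^2))) :=
      mul_le_mul_of_nonneg_left g1 (by positivity)
    have g3 : 3*((N:ℝ)-2)^2*((N:ℝ)*(∑ m, (u m - v m))^2)
        ≤ 3*((N:ℝ)-2)^2*((N:ℝ)*((N:ℝ)*(∑ n, (u n - v n)^2))) :=
      mul_le_mul_of_nonneg_left g1 (by positivity)
    rw [hQdef]
    linarith [hsums, g2, g3]
  -- apply the abstract VI theorem
  obtain ⟨u, ⟨huK, huVI⟩, huniq⟩ :=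
    VI_aux (E := EuclideanSpace ℝ (Fin N)) (WithLp.ofLp ⁻¹' K) ⟨WithLp.toLp 2 hKne.some, hKne.some_mem⟩
      (hKcl.preimage (PiLp.continuous_ofLp 2 _))
      (hKconv.linear_preimage (WithLp.linearEquiv 2 ℝ (Fin N → ℝ)).toLinearMap) F' μ L2 hμpos hL2nn hmonoF hlipF
  have hinner' : ∀ (y w : EuclideanSpace ℝ (Fin N)),
      ⟪F' y, w - y⟫ = ∑ n, (w n - y n) * F y n := by
    intro y w
    rw [PiLp.inner_apply]
    simp only [RCLike.inner_apply, starRingEnd_apply, star_trivial, PiLp.sub_apply]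
    exact Finset.sum_congr rfl fun n _ => rfl
  refine ⟨u.ofLp, ⟨huK, fun β hβ => ?_⟩, fun y hy => ?_⟩
  · have := huVI (WithLp.toLp 2 β) hβ
    rw [hinner'] at this
    exact this
  · have hyu : WithLp.toLp 2 y = u := huniq (WithLp.toLp 2 y) ⟨hy.1, fun w hw => by
      rw [hinner']
      exact hy.2 w.ofLp hw⟩
    rw [← hyu]
end

section
/- Let K ⊆ ℝ^N be nonempty, closed, convex, and such that β + 𝟙 ∈ K and β − 𝟙 ∈ K whenever β ∈ K. If β* ∈ K solves the variational inequality (β − β*)ᵀF(β*) ≥ 0 for all β ∈ K, then Σ_{n=1}^{N} ( C'_n(x*_n) + x*_n/(α(N−1)) − λ(β*) ) = 0, where x* = x(β*). -/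
/-!
Each component of the pseudo-gradient `F(β*)` is `(N − 1)/N` times the corresponding summand of
the claim. Testing the variational inequality at `β* + 𝟙` and `β* − 𝟙` gives `∑ F(β*) ≥ 0` and
`∑ F(β*) ≤ 0`, so `∑ F(β*) = 0`.
-/

open Finset

theorem sum_eq_zero_of_variationalInequality_of_shift_mem {ι : Type*} [Fintype ι]
    {K : Set (ι → ℝ)} {b g : ι → ℝ}
    (hplus : (fun i => b i + 1) ∈ K) (hminus : (fun i => b i - 1) ∈ K)
    (hVI : ∀ β ∈ K, 0 ≤ ∑ i, (β i - b i) * g i) :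
    ∑ i, g i = 0 := by
  have hnonneg : 0 ≤ ∑ i, g i := by simpa using hVI _ hplus
  have hnonpos : 0 ≤ -∑ i, g i := by simpa using hVI _ hminus
  linarith

theorem pseudoGradient_eq_mul_residual {N α xtot S βn d : ℝ} (hN : N ≠ 0) (hN1 : N - 1 ≠ 0) :
    (N - 1) / N * d + ((S - xtot) * (N - 2) + N * βn) / (α * N ^ 2)
      = (N - 1) / N * (d + ((xtot - S) / N + βn) / (α * (N - 1)) - (xtot - S) / (α * N)) := by
  simp only [div_eq_mul_inv, mul_inv]
  field_simp
  ring

theorem vGNE_sum_stationarity_general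
    (N : ℕ) (hN : 2 ≤ N) (α xtot : ℝ)
    (C : Fin N → ℝ → ℝ)
    (x : (Fin N → ℝ) → Fin N → ℝ)
    (hx : ∀ β n, x β n = (xtot - ∑ m, β m) / (N : ℝ) + β n)
    (lam : (Fin N → ℝ) → ℝ)
    (hlam : ∀ β, lam β = (xtot - ∑ m, β m) / (α * (N : ℝ)))
    (F : (Fin N → ℝ) → Fin N → ℝ)
    (hF : ∀ β n, F β n =
      (((N : ℝ) - 1) / (N : ℝ)) * deriv (C n) (x β n)
        + (((∑ m, β m) - xtot) * ((N : ℝ) - 2) + (N : ℝ) * β n) / (α * (N : ℝ) ^ 2))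
    (K : Set (Fin N → ℝ))
    (hshift : ∀ β ∈ K, (fun n => β n + 1) ∈ K ∧ (fun n => β n - 1) ∈ K)
    (βs : Fin N → ℝ) (hβsK : βs ∈ K)
    (hVI : ∀ β ∈ K, 0 ≤ ∑ n, (β n - βs n) * F βs n) :
    ∑ n, (deriv (C n) (x βs n) + x βs n / (α * ((N : ℝ) - 1)) - lam βs) = 0 := by
  have hNR : (2 : ℝ) ≤ N := by exact_mod_cast hN
  have hF_eq : ∀ n, F βs n = ((N : ℝ) - 1) / N *
      (deriv (C n) (x βs n) + x βs n / (α * ((N : ℝ) - 1)) - lam βs) := fun n => by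
    rw [hF, hx, hlam]
    exact pseudoGradient_eq_mul_residual (by linarith) (by linarith)
  have hFsum := sum_eq_zero_of_variationalInequality_of_shift_mem
    (hshift βs hβsK).1 (hshift βs hβsK).2 hVI
  rw [sum_congr rfl fun n _ => hF_eq n, ← mul_sum] at hFsum
  exact (mul_eq_zero.mp hFsum).resolve_left (div_ne_zero (by linarith) (by linarith))

/-- Let `K ⊆ ℝ^N` be nonempty, closed, convex, and invariant under shifts by
`±𝟙`. If `β* ∈ K` solves the variational inequality `(β − β*)ᵀF(β*) ≥ 0` for all `β ∈ K`,
then `Σ_n ( C'_n(x*_n) + x*_n/(α(N−1)) − λ(β*) ) = 0`, where `x* = x(β*)`. -/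
theorem vGNE_sum_stationarity
    (N : ℕ) (hN : 2 ≤ N) (α κ xtot : ℝ) (hα : 0 < α) (hκ : 0 < κ)
    (C : Fin N → ℝ → ℝ)
    (hC2 : ∀ n, ContDiff ℝ 2 (C n))
    (hCconv : ∀ n, ConvexOn ℝ Set.univ (C n))
    (hClip : ∀ n, ∀ y y' : ℝ, |deriv (C n) y' - deriv (C n) y| ≤ κ * |y' - y|)
    (x : (Fin N → ℝ) → Fin N → ℝ)
    (hx : ∀ β n, x β n = (xtot - ∑ m, β m) / (N : ℝ) + β n)
    (lam : (Fin N → ℝ) → ℝ)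
    (hlam : ∀ β, lam β = (xtot - ∑ m, β m) / (α * (N : ℝ)))
    (F : (Fin N → ℝ) → Fin N → ℝ)
    (hF : ∀ β n, F β n =
      (((N : ℝ) - 1) / (N : ℝ)) * deriv (C n) (x β n)
        + (((∑ m, β m) - xtot) * ((N : ℝ) - 2) + (N : ℝ) * β n) / (α * (N : ℝ) ^ 2))
    (K : Set (Fin N → ℝ)) (hKne : K.Nonempty) (hKcl : IsClosed K) (hKconv : Convex ℝ K)
    (hshift : ∀ β ∈ K, (fun n => β n + 1) ∈ K ∧ (fun n => β n - 1) ∈ K)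
    (βs : Fin N → ℝ) (hβsK : βs ∈ K)
    (hVI : ∀ β ∈ K, 0 ≤ ∑ n, (β n - βs n) * F βs n) :
    ∑ n, (deriv (C n) (x βs n) + x βs n / (α * ((N : ℝ) - 1)) - lam βs) = 0 :=
  vGNE_sum_stationarity_general N hN α xtot C x hx lam hlam F hF K hshift βs hβsK hVI
end

section
/- Assume α < 2/(κ(N−1)). Let K ⊆ ℝ^N be nonempty, closed, convex, and such that β + 𝟙 ∈ K and β − 𝟙 ∈ K whenever β ∈ K. Let β* ∈ K be the (unique) solution of the variational inequality (β − β*)ᵀF(β*) ≥ 0 for all β ∈ K, and set x* = x(β*). Define D_n(y) = C_n(y) + y²/(2α(N−1)) and Θ = { x(β) : β ∈ K }. Then x* is the unique minimizer of x ↦ Σ_{n=1}^{N} D_n(x_n) over x ∈ Θ. -/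
/-- Supporting-line inequality for a differentiable convex function on ℝ. -/
lemma convex_support_line {f : ℝ → ℝ} (hf : ConvexOn ℝ Set.univ f)
    (hd : Differentiable ℝ f) (a b : ℝ) :
    f a + deriv f a * (b - a) ≤ f b := by
  rcases lt_trichotomy a b with h | h | h
  · have hs := hf.deriv_le_slope (Set.mem_univ a) (Set.mem_univ b) h (hd a)
    rw [slope_def_field] at hs
    have := (le_div_iff₀ (sub_pos.2 h)).mp hs
    linarith
  · subst h; simp
  · have hs := hf.slope_le_deriv (Set.mem_univ b) (Set.mem_univ a) h (hd a)
    rw [slope_def_field] at hs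
    have := (div_le_iff₀ (sub_pos.2 h)).mp hs
    nlinarith


/-- Assume `α < 2/(κ(N−1))` and let `K ⊆ ℝ^N` be nonempty, closed, convex,
and invariant under shifts by `±𝟙`. Let `β* ∈ K` solve the VI `(β − β*)ᵀF(β*) ≥ 0` for
all `β ∈ K` and set `x* = x(β*)`, `D_n(y) = C_n(y) + y²/(2α(N−1))`, `Θ = x(K)`.
Then `x*` is the unique minimizer of `x ↦ Σ_n D_n(x_n)` over `Θ`. -/
theorem vGNE_is_unique_minimizer_of_modified_welfare
    (N : ℕ) (hN : 2 ≤ N) (α κ xtot : ℝ) (hα : 0 < α) (hκ : 0 < κ)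
    (C : Fin N → ℝ → ℝ)
    (hC2 : ∀ n, ContDiff ℝ 2 (C n))
    (hCconv : ∀ n, ConvexOn ℝ Set.univ (C n))
    (hClip : ∀ n, ∀ y y' : ℝ, |deriv (C n) y' - deriv (C n) y| ≤ κ * |y' - y|)
    (x : (Fin N → ℝ) → Fin N → ℝ)
    (hx : ∀ β n, x β n = (xtot - ∑ m, β m) / (N : ℝ) + β n)
    (F : (Fin N → ℝ) → Fin N → ℝ)
    (hF : ∀ β n, F β n =
      (((N : ℝ) - 1) / (N : ℝ)) * deriv (C n) (x β n)
        + (((∑ m, β m) - xtot) * ((N : ℝ) - 2) + (N : ℝ) * β n) / (α * (N : ℝ) ^ 2))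
    (hαlt : α < 2 / (κ * ((N : ℝ) - 1)))
    (K : Set (Fin N → ℝ)) (hKne : K.Nonempty) (hKcl : IsClosed K) (hKconv : Convex ℝ K)
    (hshift : ∀ β ∈ K, (fun n => β n + 1) ∈ K ∧ (fun n => β n - 1) ∈ K)
    (βs : Fin N → ℝ) (hβsK : βs ∈ K)
    (hVI : ∀ β ∈ K, 0 ≤ ∑ n, (β n - βs n) * F βs n)
    (Dn : Fin N → ℝ → ℝ)
    (hDn : ∀ n y, Dn n y = C n y + y ^ 2 / (2 * α * ((N : ℝ) - 1)))
    (Θ : Set (Fin N → ℝ)) (hΘ : Θ = x '' K) :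
    (∀ y ∈ Θ, ∑ n, Dn n (x βs n) ≤ ∑ n, Dn n (y n)) ∧
      ∀ y ∈ Θ, (∀ z ∈ Θ, ∑ n, Dn n (y n) ≤ ∑ n, Dn n (z n)) → y = x βs := by
  have hN2 : (2:ℝ) ≤ (N:ℝ) := by exact_mod_cast hN
  have hNpos : (0:ℝ) < (N:ℝ) := by linarith
  have hN0 : (N:ℝ) ≠ 0 := ne_of_gt hNpos
  have hα0 : α ≠ 0 := ne_of_gt hα
  obtain ⟨c, hc_def⟩ : ∃ c : ℝ, c = α * ((N:ℝ) - 1) := ⟨_, rfl⟩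
  have hc : 0 < c := by rw [hc_def]; apply mul_pos hα; linarith
  have hc0 : c ≠ 0 := ne_of_gt hc
  obtain ⟨g, hg⟩ : ∃ g : Fin N → ℝ → ℝ, ∀ n t, g n t = deriv (C n) t + t / c :=
    ⟨_, fun n t => rfl⟩
  have hfrac : (0:ℝ) < ((N:ℝ) - 1) / (N:ℝ) := div_pos (by linarith) hNpos
  have ha : ((N:ℝ) - 1) / (N:ℝ) ≠ 0 := ne_of_gt hfrac
  -- supporting line inequality for Dn
  have hsup : ∀ n (a b : ℝ),
      Dn n a + (b - a) * g n a + (b - a) ^ 2 / (2 * c) ≤ Dn n b := by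
    intro n a b
    have hcs := convex_support_line (hCconv n)
      ((hC2 n).differentiable (by norm_num)) a b
    have hq : b ^ 2 / (2 * c) =
        a ^ 2 / (2 * c) + (a / c) * (b - a) + (b - a) ^ 2 / (2 * c) := by
      field_simp; ring
    have h1 : Dn n a = C n a + a ^ 2 / (2 * c) := by rw [hDn, hc_def]; ring_nf
    have h2 : Dn n b = C n b + b ^ 2 / (2 * c) := by rw [hDn, hc_def]; ring_nf
    have h3 : (b - a) * g n a = deriv (C n) a * (b - a) + (a / c) * (b - a) := by
      rw [hg]; ring
    rw [h1, h2, h3, hq]; linarith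
  -- F in terms of g
  have hFg : ∀ β n, F β n =
      (((N:ℝ) - 1) / (N:ℝ)) * (g n (x β n) + ((∑ m, β m) - xtot) / (α * (N:ℝ))) := by
    intro β n
    rw [hF β n, hg, hc_def, hx β n]
    set D := deriv (C n) ((xtot - ∑ m, β m) / (N:ℝ) + β n) with hD
    have hN1 : (N:ℝ) - 1 ≠ 0 := by intro h; nlinarith
    field_simp
    ring
  -- sum of F at βs is zero
  have hsum0 : ∑ n, F βs n = 0 := by
    have h1 := hVI (fun n => βs n + 1) (hshift βs hβsK).1
    have h2 := hVI (fun n => βs n - 1) (hshift βs hβsK).2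
    have e1 : ∑ n, ((fun n => βs n + 1) n - βs n) * F βs n = ∑ n, F βs n :=
      Finset.sum_congr rfl fun n _ => by simp
    have e2 : ∑ n, ((fun n => βs n - 1) n - βs n) * F βs n = -∑ n, F βs n := by
      rw [← Finset.sum_neg_distrib]
      exact Finset.sum_congr rfl fun n _ => by simp
    rw [e1] at h1; rw [e2] at h2; linarith
  -- sum of g at the allocation
  have hgsum : ∑ n, g n (x βs n) = (xtot - ∑ m, βs m) / α := by
    have hcalc : ∑ n, F βs n =
        (((N:ℝ) - 1) / (N:ℝ)) * (∑ n, g n (x βs n))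
          + (N:ℝ) * ((((N:ℝ) - 1) / (N:ℝ)) * (((∑ m, βs m) - xtot) / (α * (N:ℝ)))) := by
      rw [Finset.sum_congr rfl fun n (_ : n ∈ Finset.univ) =>
        show F βs n = (((N:ℝ) - 1) / (N:ℝ)) * g n (x βs n)
            + (((N:ℝ) - 1) / (N:ℝ)) * (((∑ m, βs m) - xtot) / (α * (N:ℝ))) from by
          rw [hFg βs n]; ring]
      rw [Finset.sum_add_distrib, ← Finset.mul_sum, Finset.sum_const, Finset.card_univ,
        Fintype.card_fin, nsmul_eq_mul]
    have h0 : (((N:ℝ) - 1) / (N:ℝ)) * (∑ n, g n (x βs n))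
        + (N:ℝ) * ((((N:ℝ) - 1) / (N:ℝ)) * (((∑ m, βs m) - xtot) / (α * (N:ℝ)))) = 0 := by
      rw [← hcalc]; exact hsum0
    have hr : (N:ℝ) * ((((N:ℝ) - 1) / (N:ℝ)) * (((∑ m, βs m) - xtot) / (α * (N:ℝ))))
        = -((((N:ℝ) - 1) / (N:ℝ)) * ((xtot - ∑ m, βs m) / α)) := by
      field_simp; ring
    have hfin : (((N:ℝ) - 1) / (N:ℝ)) * (∑ n, g n (x βs n))
        = (((N:ℝ) - 1) / (N:ℝ)) * ((xtot - ∑ m, βs m) / α) := by linarith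
    exact mul_left_cancel₀ ha hfin
  -- the VI in x-coordinates
  have VIx : ∀ β ∈ K, 0 ≤ ∑ n, (x β n - x βs n) * g n (x βs n) := by
    intro β hβ
    have hvi := hVI β hβ
    have hA : ∑ n, (β n - βs n) * F βs n =
        (((N:ℝ) - 1) / (N:ℝ)) * ((∑ n, (β n - βs n) * g n (x βs n))
          + (((∑ m, βs m) - xtot) / (α * (N:ℝ))) * ((∑ m, β m) - ∑ m, βs m)) := by
      rw [Finset.sum_congr rfl fun n (_ : n ∈ Finset.univ) =>
        show (β n - βs n) * F βs n
            = (((N:ℝ) - 1) / (N:ℝ)) * ((β n - βs n) * g n (x βs n))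
              + (((N:ℝ) - 1) / (N:ℝ)) * ((((∑ m, βs m) - xtot) / (α * (N:ℝ))) * (β n - βs n))
          from by rw [hFg βs n]; ring]
      rw [Finset.sum_add_distrib, ← Finset.mul_sum, ← Finset.mul_sum, ← Finset.mul_sum,
        ← Finset.sum_sub_distrib, mul_add]
    have hB : ∑ n, (x β n - x βs n) * g n (x βs n) =
        (∑ n, (β n - βs n) * g n (x βs n))
          + (((∑ m, βs m) - ∑ m, β m) / (N:ℝ)) * ∑ n, g n (x βs n) := by
      rw [Finset.sum_congr rfl fun n (_ : n ∈ Finset.univ) =>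
        show (x β n - x βs n) * g n (x βs n)
            = (β n - βs n) * g n (x βs n)
              + (((∑ m, βs m) - ∑ m, β m) / (N:ℝ)) * g n (x βs n) from by
          rw [hx β n, hx βs n]; ring]
      rw [Finset.sum_add_distrib, ← Finset.mul_sum]
    have heq : (((∑ m, βs m) - ∑ m, β m) / (N:ℝ)) * ((xtot - ∑ m, βs m) / α)
        = (((∑ m, βs m) - xtot) / (α * (N:ℝ))) * ((∑ m, β m) - ∑ m, βs m) := by
      field_simp; ring
    rw [hB, hgsum, heq]
    rw [hA] at hvi
    by_contra h
    push_neg at h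
    nlinarith [mul_pos hfrac (neg_pos.mpr h), hvi]
  constructor
  · -- minimality
    intro y hy
    rw [hΘ] at hy
    obtain ⟨β, hβK, rfl⟩ := hy
    have h2 := Finset.sum_le_sum (fun n (_ : n ∈ Finset.univ) => hsup n (x βs n) (x β n))
    rw [Finset.sum_add_distrib, Finset.sum_add_distrib] at h2
    have h3 := VIx β hβK
    have h4 : 0 ≤ ∑ n, (x β n - x βs n) ^ 2 / (2 * c) :=
      Finset.sum_nonneg fun n _ => by positivity
    linarith
  · -- uniqueness
    intro y hy hmin
    rw [hΘ] at hy
    obtain ⟨β, hβK, rfl⟩ := hy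
    have hxs : x βs ∈ Θ := by rw [hΘ]; exact ⟨βs, hβsK, rfl⟩
    have hle := hmin (x βs) hxs
    have h2 := Finset.sum_le_sum (fun n (_ : n ∈ Finset.univ) => hsup n (x βs n) (x β n))
    rw [Finset.sum_add_distrib, Finset.sum_add_distrib] at h2
    have h3 := VIx β hβK
    have hsq_le : ∑ n, (x β n - x βs n) ^ 2 / (2 * c) ≤ 0 := by linarith
    have hsq_eq : ∑ n, (x β n - x βs n) ^ 2 / (2 * c) = 0 :=
      le_antisymm hsq_le (Finset.sum_nonneg fun n _ => by positivity)
    have hall := (Finset.sum_eq_zero_iff_of_nonneg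
      (fun n (_ : n ∈ Finset.univ) => by positivity)).mp hsq_eq
    funext n
    have hn := hall n (Finset.mem_univ n)
    have h2c : (2 * c) ≠ 0 := by positivity
    field_simp at hn
    exact sub_eq_zero.mp ((pow_eq_zero_iff two_ne_zero).mp (by rw [hn]; ring))
end

section
/- Assume x_tot > 0, C_n(0) ≥ 0 and C_n(y) > 0 for all y > 0, and let Θ ⊆ ℝ^N be a nonempty convex set such that every x ∈ Θ satisfies x ≥ 0 componentwise and Σ_n x_n = x_tot. Let x̄ be a minimizer of Σ_n C_n(x_n) over Θ and let x* be the minimizer over Θ of Σ_n D_n(x_n), where D_n(y) = C_n(y) + y²/(2α(N−1)) (x* is the flexibility allocation at the v-GNE). Then Σ_n C_n(x̄_n) > 0 and the Price of Anarchy PoA = Σ_n C_n(x*_n) / Σ_n C_n(x̄_n) satisfies PoA < 1 + (1/(2α(N−1)))·(Σ_n x̄_n²)/(Σ_n C_n(x̄_n)); equivalently, Σ_n C_n(x*_n) < Σ_n C_n(x̄_n) + Σ_n x̄_n²/(2α(N−1)). -/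
/-- Assume `x_tot > 0`, `C_n(0) ≥ 0` and `C_n(y) > 0` for `y > 0`, and let
`Θ ⊆ ℝ^N` be nonempty convex with every `x ∈ Θ` nonnegative and summing to `x_tot`.
Let `x̄` minimize `Σ_n C_n(x_n)` over `Θ` and let `x*` minimize `Σ_n D_n(x_n)` over `Θ`,
with `D_n(y) = C_n(y) + y²/(2α(N−1))`. Then `Σ_n C_n(x̄_n) > 0` and
`PoA = Σ_n C_n(x*_n)/Σ_n C_n(x̄_n) < 1 + (1/(2α(N−1)))·(Σ_n x̄_n²)/(Σ_n C_n(x̄_n))`;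
equivalently `Σ_n C_n(x*_n) < Σ_n C_n(x̄_n) + Σ_n x̄_n²/(2α(N−1))`. -/
theorem price_of_anarchy_bound
    (N : ℕ) (hN : 2 ≤ N) (α κ xtot : ℝ) (hα : 0 < α) (hκ : 0 < κ)
    (C : Fin N → ℝ → ℝ)
    (hC2 : ∀ n, ContDiff ℝ 2 (C n))
    (hCconv : ∀ n, ConvexOn ℝ Set.univ (C n))
    (hClip : ∀ n, ∀ y y' : ℝ, |deriv (C n) y' - deriv (C n) y| ≤ κ * |y' - y|)
    (hxtot : 0 < xtot)
    (hC0 : ∀ n, 0 ≤ C n 0) (hCpos : ∀ n, ∀ y : ℝ, 0 < y → 0 < C n y)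
    (Θ : Set (Fin N → ℝ)) (hΘne : Θ.Nonempty) (hΘconv : Convex ℝ Θ)
    (hΘfeas : ∀ x ∈ Θ, (∀ n, 0 ≤ x n) ∧ ∑ n, x n = xtot)
    (Dn : Fin N → ℝ → ℝ)
    (hDn : ∀ n y, Dn n y = C n y + y ^ 2 / (2 * α * ((N : ℝ) - 1)))
    (xb : Fin N → ℝ) (hxbΘ : xb ∈ Θ)
    (hxbmin : ∀ y ∈ Θ, ∑ n, C n (xb n) ≤ ∑ n, C n (y n))
    (xs : Fin N → ℝ) (hxsΘ : xs ∈ Θ)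
    (hxsmin : ∀ y ∈ Θ, ∑ n, Dn n (xs n) ≤ ∑ n, Dn n (y n)) :
    0 < ∑ n, C n (xb n) ∧
      (∑ n, C n (xs n)) / (∑ n, C n (xb n)) <
        1 + (1 / (2 * α * ((N : ℝ) - 1))) * (∑ n, (xb n) ^ 2) / (∑ n, C n (xb n)) ∧
      ∑ n, C n (xs n) < (∑ n, C n (xb n)) + (∑ n, (xb n) ^ 2) / (2 * α * ((N : ℝ) - 1)) := by
  set K : ℝ := 2 * α * ((N : ℝ) - 1) with hKdef
  have hN2 : (2 : ℝ) ≤ (N : ℝ) := by exact_mod_cast hN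
  have hK : 0 < K := by
    have : (0: ℝ) < (N : ℝ) - 1 := by linarith
    positivity
  obtain ⟨hxbnn, hxbsum⟩ := hΘfeas xb hxbΘ
  obtain ⟨hxsnn, hxssum⟩ := hΘfeas xs hxsΘ
  have hCnn : ∀ n, 0 ≤ C n (xb n) := by
    intro n
    rcases lt_or_eq_of_le (hxbnn n) with h | h
    · exact (hCpos n _ h).le
    · rw [← h]; exact hC0 n
  have hex : ∃ n, 0 < xb n := by
    by_contra h
    push_neg at h
    have : ∑ n, xb n ≤ 0 := Finset.sum_nonpos fun n _ => h n
    linarith [hxbsum ▸ this]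
  obtain ⟨n0, hn0⟩ := hex
  have hS : 0 < ∑ n, C n (xb n) := by
    have h1 : C n0 (xb n0) ≤ ∑ n, C n (xb n) :=
      Finset.single_le_sum (fun n _ => hCnn n) (Finset.mem_univ n0)
    exact lt_of_lt_of_le (hCpos n0 _ hn0) h1
  have hexs : ∃ n, 0 < xs n := by
    by_contra h
    push_neg at h
    have : ∑ n, xs n ≤ 0 := Finset.sum_nonpos fun n _ => h n
    linarith [hxssum ▸ this]
  obtain ⟨m0, hm0⟩ := hexs
  have hxs2 : 0 < ∑ n, (xs n) ^ 2 := by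
    have h1 : (xs m0) ^ 2 ≤ ∑ n, (xs n) ^ 2 :=
      Finset.single_le_sum (f := fun n => (xs n) ^ 2) (fun n _ => sq_nonneg _) (Finset.mem_univ m0)
    nlinarith
  have key : ∑ n, C n (xs n) + (∑ n, (xs n) ^ 2) / K ≤
      ∑ n, C n (xb n) + (∑ n, (xb n) ^ 2) / K := by
    have h := hxsmin xb hxbΘ
    simp only [hDn, Finset.sum_add_distrib, ← Finset.sum_div] at h
    exact h
  have third : ∑ n, C n (xs n) < (∑ n, C n (xb n)) + (∑ n, (xb n) ^ 2) / K := by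
    have : 0 < (∑ n, (xs n) ^ 2) / K := div_pos hxs2 hK
    linarith
  refine ⟨hS, ?_, third⟩
  have hrhs : 1 + (1 / K) * (∑ n, (xb n) ^ 2) / (∑ n, C n (xb n)) =
      ((∑ n, C n (xb n)) + (∑ n, (xb n) ^ 2) / K) / (∑ n, C n (xb n)) := by
    field_simp
  rw [hrhs]
  exact div_lt_div_of_pos_right third hS
end
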